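/- arXiv:2210.15320 — 2 statements merged into one kernel-verified Lean document; each statement's English description precedes it below -/
import Mathlib

section
/- Let A and B be n×n real symmetric matrices such that rank(A − B) ≤ r. Then the number of eigenvalues of A lying in any interval (−∞, t] differs from the number of eigenvalues of B in (−∞, t] by at most r. Equivalently, the Kolmogorov–Smirnov distance between the empirical spectral distributions of A and B is at most r/n. -/
/-!
Let `V` be spanned by the eigenvectors of `A` with eigenvalue `≤ t`, `W` by those of `B` with
eigenvalue `> t`, and `K = ker (A - B)`, of codimension `rank (A - B)`. On `V` the quadratic form
of `A` is `≤ t‖x‖²`, on `W \ {0}` that of `B` is `> t‖x‖²`, and the two forms agree on `K`; hence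
`V ⊓ K` and `W` are disjoint, and counting dimensions gives
`#{λ_A ≤ t} = dim V ≤ (n - dim W) + (n - dim K) = #{λ_B ≤ t} + rank (A - B)`.
-/

open Finset Module Submodule RealInnerProductSpace

theorem LinearIndependent.finrank_span_image_finset {K M ι : Type*} [DivisionRing K]
    [AddCommGroup M] [Module K M] {v : ι → M} (hv : LinearIndependent K v) (s : Finset ι) :
    finrank K (span K (v '' s)) = s.card := by
  rw [Set.image_eq_range, ← Fintype.card_coe]
  exact finrank_span_eq_card (hv.comp ((↑) : s → ι) Subtype.val_injective)

theorem Submodule.finrank_add_finrank_add_finrank_le_of_disjoint {K M : Type*} [DivisionRing K]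
    [AddCommGroup M] [Module K M] [FiniteDimensional K M] {U V W : Submodule K M}
    (h : Disjoint (U ⊓ V) W) : finrank K U + finrank K V + finrank K W ≤ 2 * finrank K M := by
  have hUV := finrank_sup_add_finrank_inf_eq U V
  have hsup := (U ⊔ V).finrank_le
  have hdisj := finrank_add_finrank_le_of_disjoint h
  omega

namespace OrthonormalBasis

variable {ι E : Type*} [Fintype ι] [NormedAddCommGroup E] [InnerProductSpace ℝ E]
  (b : OrthonormalBasis ι ℝ E)

theorem inner_eq_zero_of_mem_span_image {s : Set ι} {x : E} (hx : x ∈ span ℝ (b '' s)) {i : ι}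
    (hi : i ∉ s) : ⟪b i, x⟫ = 0 := by
  have hle : span ℝ (b '' s) ≤ (ℝ ∙ b i)ᗮ := by
    refine span_le.mpr ?_
    rintro _ ⟨j, hj, rfl⟩
    exact mem_orthogonal_singleton_iff_inner_right.mpr
      (b.orthonormal.2 fun hij => hi (hij ▸ hj))
  exact mem_orthogonal_singleton_iff_inner_right.mp (hle hx)

theorem norm_sq_eq_sum_inner_sq (x : E) : ‖x‖ ^ 2 = ∑ i, ⟪b i, x⟫ ^ 2 := by
  simp only [← b.sum_sq_norm_inner_right x, Real.norm_eq_abs, sq_abs]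

variable {T : E →ₗ[ℝ] E} (hT : T.IsSymmetric) {μ : ι → ℝ} (hb : ∀ i, T (b i) = μ i • b i)
include hT hb

theorem inner_map_self_sub_mul_norm_sq (t : ℝ) (x : E) :
    ⟪x, T x⟫ - t * ‖x‖ ^ 2 = ∑ i, (μ i - t) * ⟪b i, x⟫ ^ 2 := by
  have hTb : ∀ i, ⟪b i, T x⟫ = μ i * ⟪b i, x⟫ := fun i => by
    rw [← hT, hb, real_inner_smul_left]
  rw [← b.sum_inner_mul_inner, norm_sq_eq_sum_inner_sq b, mul_sum, ← sum_sub_distrib]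
  refine sum_congr rfl fun i _ => ?_
  rw [hTb, real_inner_comm x]
  ring

theorem inner_map_self_le_of_mem_span_image {s : Set ι} {t : ℝ} (hs : ∀ i ∈ s, μ i ≤ t) {x : E}
    (hx : x ∈ span ℝ (b '' s)) : ⟪x, T x⟫ ≤ t * ‖x‖ ^ 2 := by
  rw [← sub_nonpos, inner_map_self_sub_mul_norm_sq b hT hb]
  refine sum_nonpos fun i _ => ?_
  by_cases hi : i ∈ s
  · exact mul_nonpos_of_nonpos_of_nonneg (sub_nonpos.mpr (hs i hi)) (sq_nonneg _)
  · simp [b.inner_eq_zero_of_mem_span_image hx hi]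

theorem lt_inner_map_self_of_mem_span_image {s : Set ι} {t : ℝ} (hs : ∀ i ∈ s, t < μ i) {x : E}
    (hx : x ∈ span ℝ (b '' s)) (hx0 : x ≠ 0) : t * ‖x‖ ^ 2 < ⟪x, T x⟫ := by
  have hcoord : ∀ i ∉ s, ⟪b i, x⟫ = 0 := fun i hi => b.inner_eq_zero_of_mem_span_image hx hi
  obtain ⟨j, -, hj⟩ : ∃ j ∈ univ, ⟪b j, x⟫ ^ 2 ≠ 0 := exists_ne_zero_of_sum_ne_zero <| by
    rw [← norm_sq_eq_sum_inner_sq b]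
    exact pow_ne_zero 2 (norm_ne_zero_iff.mpr hx0)
  have hjs : j ∈ s := by_contra fun hjs => hj (by simp [hcoord j hjs])
  rw [← sub_pos, inner_map_self_sub_mul_norm_sq b hT hb]
  refine sum_pos' (fun i _ => ?_) ⟨j, mem_univ j, ?_⟩
  · by_cases hi : i ∈ s
    · exact mul_nonneg (sub_nonneg.mpr (hs i hi).le) (sq_nonneg _)
    · simp [hcoord i hi]
  · exact mul_pos (sub_pos.mpr (hs j hjs)) ((sq_nonneg _).lt_of_ne' hj)

end OrthonormalBasis

namespace Matrix

theorem rank_neg {m n R : Type*} [Fintype n] [CommRing R] (M : Matrix m n R) :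
    (-M).rank = M.rank := by
  rw [← neg_one_smul R M]
  exact rank_smul_of_mem_nonZeroDivisors M isUnit_one.neg.mem_nonZeroDivisors

variable {n : Type*} [Fintype n] [DecidableEq n]

theorem IsHermitian.toEuclideanLin_eigenvectorBasis {A : Matrix n n ℝ}
    (hA : A.IsHermitian) (j : n) :
    toEuclideanLin A (hA.eigenvectorBasis j) = hA.eigenvalues j • hA.eigenvectorBasis j := by
  apply WithLp.ofLp_injective 2
  simpa [toLpLin_apply] using hA.mulVec_eigenvectorBasis j

theorem finrank_ker_toEuclideanLin_add_rank (M : Matrix n n ℝ) :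
    finrank ℝ (LinearMap.ker (toEuclideanLin M)) + M.rank = Fintype.card n := by
  rw [toEuclideanLin_eq_toLin_orthonormal, rank_eq_finrank_range_toLin M
    (EuclideanSpace.basisFun n ℝ).toBasis (EuclideanSpace.basisFun n ℝ).toBasis,
    add_comm, LinearMap.finrank_range_add_finrank_ker, finrank_euclideanSpace]

theorem card_eigenvalues_le_le_card_add_rank {A B : Matrix n n ℝ}
    (hA : A.IsHermitian) (hB : B.IsHermitian) (t : ℝ) :
    #{i | hA.eigenvalues i ≤ t} ≤ #{i | hB.eigenvalues i ≤ t} + (A - B).rank := by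
  set sA : Finset n := {i | hA.eigenvalues i ≤ t}
  set sB : Finset n := {i | hB.eigenvalues i ≤ t}
  set V := span ℝ (hA.eigenvectorBasis '' sA)
  set W := span ℝ (hB.eigenvectorBasis '' ↑sBᶜ)
  set K := LinearMap.ker (toEuclideanLin (A - B))
  have hdisj : Disjoint (V ⊓ K) W := by
    refine disjoint_def.mpr fun x hVK hxW => ?_
    by_contra hx0
    have hAx := hA.eigenvectorBasis.inner_map_self_le_of_mem_span_image
      (isSymmetric_toEuclideanLin_iff.mpr hA) hA.toEuclideanLin_eigenvectorBasis
      (s := sA) (t := t) (by simp [sA]) hVK.1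
    have hBx := hB.eigenvectorBasis.lt_inner_map_self_of_mem_span_image
      (isSymmetric_toEuclideanLin_iff.mpr hB) hB.toEuclideanLin_eigenvectorBasis
      (s := ↑sBᶜ) (t := t) (by simp [sB]) hxW hx0
    have hABx : toEuclideanLin A x = toEuclideanLin B x := by
      simpa [K, sub_eq_zero] using hVK.2
    rw [hABx] at hAx
    exact hAx.not_gt hBx
  have hV : finrank ℝ V = #sA :=
    hA.eigenvectorBasis.orthonormal.linearIndependent.finrank_span_image_finset sA
  have hW : finrank ℝ W = Fintype.card n - #sB :=
    (hB.eigenvectorBasis.orthonormal.linearIndependent.finrank_span_image_finset _).trans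
      (card_compl sB)
  have hK : finrank ℝ K + (A - B).rank = Fintype.card n :=
    finrank_ker_toEuclideanLin_add_rank (A - B)
  have hdim := finrank_add_finrank_add_finrank_le_of_disjoint hdisj
  rw [finrank_euclideanSpace] at hdim
  have hsB : #sB ≤ Fintype.card n := card_le_univ sB
  omega

end Matrix

/-- Rank inequality: if `A` and `B` are real symmetric `n×n` matrices with
`rank (A − B) ≤ r`, then for every `t` the number of eigenvalues of `A` in
`(−∞, t]` differs from that of `B` by at most `r`; equivalently the
Kolmogorov–Smirnov distance between the empirical spectral distributions is at
most `r/n`. -/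
theorem stmt_3 (n r : ℕ) (A B : Matrix (Fin n) (Fin n) ℝ)
    (hA : A.IsHermitian) (hB : B.IsHermitian)
    (hr : (A - B).rank ≤ r) :
    (∀ t : ℝ,
      |((univ.filter fun i => hA.eigenvalues i ≤ t).card : ℝ) -
        ((univ.filter fun i => hB.eigenvalues i ≤ t).card : ℝ)| ≤ r) ∧
    (∀ t : ℝ,
      |((univ.filter fun i => hA.eigenvalues i ≤ t).card : ℝ) / n -
        ((univ.filter fun i => hB.eigenvalues i ≤ t).card : ℝ) / n| ≤ r / n) := by
  have hr' : (B - A).rank ≤ r := by rwa [← neg_sub, Matrix.rank_neg]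
  have hcount : ∀ t : ℝ,
      |((univ.filter fun i => hA.eigenvalues i ≤ t).card : ℝ) -
        ((univ.filter fun i => hB.eigenvalues i ≤ t).card : ℝ)| ≤ r := fun t => by
    have hAB : (#{i | hA.eigenvalues i ≤ t} : ℝ) ≤ #{i | hB.eigenvalues i ≤ t} + r := by
      exact_mod_cast (Matrix.card_eigenvalues_le_le_card_add_rank hA hB t).trans (by omega)
    have hBA : (#{i | hB.eigenvalues i ≤ t} : ℝ) ≤ #{i | hA.eigenvalues i ≤ t} + r := by
      exact_mod_cast (Matrix.card_eigenvalues_le_le_card_add_rank hB hA t).trans (by omega)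
    exact abs_sub_le_iff.mpr ⟨by linarith, by linarith⟩
  refine ⟨hcount, fun t => ?_⟩
  rw [← sub_div, abs_div, Nat.abs_cast]
  exact div_le_div_of_nonneg_right (hcount t) n.cast_nonneg
end

section
/- Every closed walk of length 2k (k ≥ 2) in a simple graph, with no repeated consecutive vertex (no loops), whose trace visits exactly k + l distinct vertices with l ≥ 2, has at least 2l vertices of degree exactly 2 in the multigraph generated by the walk. -/
open Finset

/-- Every closed walk `v₀, v₁, …, v_{2k} = v₀` of length `2k` (`k ≥ 2`) with no
repeated consecutive vertex (no loops), visiting exactly `k + l` distinct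
vertices with `l ≥ 2`, has at least `2l` vertices whose degree in the
multigraph generated by the walk (each step contributing one edge) is
exactly `2`. -/
theorem stmt_17 (V : Type) [DecidableEq V] (k l : ℕ) (hk : 2 ≤ k) (hl : 2 ≤ l)
    (v : ℕ → V) (hclosed : v (2 * k) = v 0)
    (hnoloop : ∀ i < 2 * k, v i ≠ v (i + 1))
    (hcard : ((Finset.range (2 * k)).image v).card = k + l) :
    2 * l ≤ (((Finset.range (2 * k)).image v).filter fun x =>
      ((Finset.range (2 * k)).filter fun i => v i = x).card +
      ((Finset.range (2 * k)).filter fun i => v (i + 1) = x).card = 2).card := by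
  have hn : 0 < 2 * k := by omega
  -- the two fiber counts agree, by rotating the walk
  have key : ∀ x : V, ((Finset.range (2 * k)).filter fun i => v (i + 1) = x).card
      = ((Finset.range (2 * k)).filter fun i => v i = x).card := by
    intro x
    apply Finset.card_bij (fun i _ => (i + 1) % (2 * k))
    · intro a ha
      simp only [Finset.mem_filter, Finset.mem_range] at ha ⊢
      refine ⟨Nat.mod_lt _ hn, ?_⟩
      rcases Nat.lt_or_ge (a + 1) (2 * k) with h | h
      · rw [Nat.mod_eq_of_lt h]; exact ha.2
      · have he : a + 1 = 2 * k := by omega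
        rw [he, Nat.mod_self, ← hclosed, ← he]
        exact ha.2
    · intro a ha b hb hab
      simp only [Finset.mem_filter, Finset.mem_range] at ha hb
      rcases Nat.lt_or_ge (a + 1) (2 * k) with h1 | h1 <;>
        rcases Nat.lt_or_ge (b + 1) (2 * k) with h2 | h2
      · rw [Nat.mod_eq_of_lt h1, Nat.mod_eq_of_lt h2] at hab; omega
      · have : b + 1 = 2 * k := by omega
        rw [Nat.mod_eq_of_lt h1, this, Nat.mod_self] at hab; omega
      · have : a + 1 = 2 * k := by omega
        rw [Nat.mod_eq_of_lt h2, this, Nat.mod_self] at hab; omega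
      · omega
    · intro b hb
      simp only [Finset.mem_filter, Finset.mem_range] at hb
      rcases Nat.eq_zero_or_pos b with rfl | hbpos
      · refine ⟨2 * k - 1, ?_, ?_⟩
        · simp only [Finset.mem_filter, Finset.mem_range]
          have he : 2 * k - 1 + 1 = 2 * k := by omega
          rw [he, hclosed]
          exact ⟨by omega, hb.2⟩
        · have he : 2 * k - 1 + 1 = 2 * k := by omega
          rw [he, Nat.mod_self]
      · refine ⟨b - 1, ?_, ?_⟩
        · simp only [Finset.mem_filter, Finset.mem_range]
          have he : b - 1 + 1 = b := by omega
          rw [he]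
          exact ⟨by omega, hb.2⟩
        · have he : b - 1 + 1 = b := by omega
          rw [he, Nat.mod_eq_of_lt hb.1]
  -- rewrite the degree-2 condition as "exactly one occurrence"
  have hfilter : (((Finset.range (2 * k)).image v).filter fun x =>
        ((Finset.range (2 * k)).filter fun i => v i = x).card +
        ((Finset.range (2 * k)).filter fun i => v (i + 1) = x).card = 2)
      = ((Finset.range (2 * k)).image v).filter fun x =>
        ((Finset.range (2 * k)).filter fun i => v i = x).card = 1 := by
    apply Finset.filter_congr
    intro x _
    rw [key x]
    omega
  rw [hfilter]
  set A := (Finset.range (2 * k)).image v with hA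
  set m : V → ℕ := fun x => ((Finset.range (2 * k)).filter fun i => v i = x).card with hm
  have hsum : ∑ x ∈ A, m x = 2 * k := by
    rw [hA, hm, ← Finset.card_eq_sum_card_image v (Finset.range (2 * k)), Finset.card_range]
  have hpos : ∀ x ∈ A, 1 ≤ m x := by
    intro x hx
    rw [hA] at hx
    obtain ⟨i, hi, rfl⟩ := Finset.mem_image.mp hx
    have : i ∈ (Finset.range (2 * k)).filter fun j => v j = v i :=
      Finset.mem_filter.mpr ⟨hi, rfl⟩
    exact Finset.card_pos.mpr ⟨i, this⟩
  have hsplit : ∑ x ∈ A.filter (fun x => m x = 1), m x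
      + ∑ x ∈ A.filter (fun x => ¬ m x = 1), m x = 2 * k := by
    rw [Finset.sum_filter_add_sum_filter_not, hsum]
  have hcards : (A.filter (fun x => m x = 1)).card
      + (A.filter (fun x => ¬ m x = 1)).card = A.card :=
    Finset.card_filter_add_card_filter_not _
  have h1 : ∑ x ∈ A.filter (fun x => m x = 1), m x
      = (A.filter (fun x => m x = 1)).card := by
    rw [Finset.card_eq_sum_ones]
    exact Finset.sum_congr rfl fun x hx => (Finset.mem_filter.mp hx).2
  have h2 : 2 * (A.filter (fun x => ¬ m x = 1)).card
      ≤ ∑ x ∈ A.filter (fun x => ¬ m x = 1), m x := by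
    calc 2 * (A.filter (fun x => ¬ m x = 1)).card
        = ∑ _x ∈ A.filter (fun x => ¬ m x = 1), 2 := by
          rw [Finset.sum_const, smul_eq_mul, Nat.mul_comm]
      _ ≤ _ := Finset.sum_le_sum fun x hx => by
          have h := Finset.mem_filter.mp hx
          have := hpos x h.1
          omega
  show 2 * l ≤ (A.filter (fun x => m x = 1)).card
  omega
end
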